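/- Let Q be the presented group ⟨x₁, x₂, x₃, x₄ | x₁²x₂²x₃²x₄²⟩ (the fundamental group of the connected sum M² = K # K of two Klein bottles), let G = Q × ℤ (the fundamental group of M³ = M² × S¹), let w : G → ℤ/2ℤ be the group homomorphism determined by w(xᵢ, 0) = 1 for i = 1,…,4 and w(1, n) = 0 for all n ∈ ℤ (the orientation character of M³), and set α = (x₁, 0) and β = (x₃, 0) (the classes of the two loops, each lying in its own Klein bottle summand and reversing its orientation). Then there exists no element λ ∈ G such that w(λ) ≠ 0 and conjugation by λ either fixes both α and β (i.e. λ⁻¹αλ = α and λ⁻¹βλ = β) or swaps them (i.e. λ⁻¹αλ = β and λ⁻¹βλ = α). -/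

import Mathlib

/-!
Sending `x₁, x₂, x₃, x₄` to `a, a⁻¹, c, c⁻¹` kills the relator for any `a, c` in any group.
With `a = (0 1)` and `c = (0 1 2 3 4 5)` in `S₆`, all four images are odd, so the orientation
character is the sign of this representation. A permutation centralizing both `a` and `c` is a
power of `c` fixing the pair `{0, 1}`, hence trivial and even; and `a`, `c` have different cycle
types, so no conjugation swaps them.
-/

open Multiplicative

/-- The single relator `x₁²x₂²x₃²x₄²` of the genus-4 non-orientable surface group. -/
def kleinRels : Set (FreeGroup (Fin 4)) :=
  {(FreeGroup.of 0) ^ 2 * (FreeGroup.of 1) ^ 2 * (FreeGroup.of 2) ^ 2 * (FreeGroup.of 3) ^ 2}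

/-- `Q = π₁(K # K)`, the presented group `⟨x₁, x₂, x₃, x₄ ∣ x₁²x₂²x₃²x₄²⟩`. -/
abbrev KleinSumGroup : Type := PresentedGroup kleinRels

/-- `G = Q × ℤ = π₁((K # K) × S¹)`. -/
abbrev KleinSumGroupZ : Type := KleinSumGroup × Multiplicative ℤ

/-- The orientation character on `Q`, sending each generator `xᵢ` to `1 ∈ ℤ/2`. -/
noncomputable def w₀ : KleinSumGroup →* Multiplicative (ZMod 2) :=
  PresentedGroup.toGroup (f := fun _ => ofAdd (1 : ZMod 2)) (by
    intro r hr
    rw [kleinRels, Set.mem_singleton_iff] at hr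
    subst hr
    simp only [map_mul, map_pow, FreeGroup.lift_apply_of]
    decide)

/-- The orientation character `w : G → ℤ/2` of `M³ = (K # K) × S¹`: it takes value `1` on each
`(xᵢ, 0)` and value `0` on the `ℤ` factor. -/
noncomputable def wChar : KleinSumGroupZ →* Multiplicative (ZMod 2) :=
  w₀.comp (MonoidHom.fst _ _)

open Equiv Equiv.Perm

def unitsIntToZModTwo : ℤˣ →* Multiplicative (ZMod 2) where
  toFun u := if u = 1 then 1 else ofAdd 1
  map_one' := if_pos rfl
  map_mul' := by decide

section KleinSumLift

variable {H : Type*} [Group H]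

theorem kleinRels_lift_eq_one (a c : H) :
    ∀ r ∈ kleinRels, FreeGroup.lift ![a, a⁻¹, c, c⁻¹] r = 1 := by
  rintro r rfl
  simp [sq, mul_assoc]

noncomputable def kleinSumLift (a c : H) : KleinSumGroup →* H :=
  PresentedGroup.toGroup (kleinRels_lift_eq_one a c)

@[simp]
theorem kleinSumLift_of (a c : H) (i : Fin 4) :
    kleinSumLift a c (PresentedGroup.of i) = ![a, a⁻¹, c, c⁻¹] i :=
  PresentedGroup.toGroup.of _

end KleinSumLift

noncomputable abbrev kleinSumToPerm : KleinSumGroup →* Perm (Fin 6) :=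
  kleinSumLift (swap 0 1) (finRotate 6)

theorem w₀_eq_sign_kleinSumToPerm :
    w₀ = unitsIntToZModTwo.comp (sign.comp kleinSumToPerm) := by
  refine PresentedGroup.ext fun i => ?_
  simp only [w₀, PresentedGroup.toGroup.of, MonoidHom.comp_apply, kleinSumLift_of]
  fin_cases i <;> decide

set_option maxRecDepth 10000 in
theorem eq_one_of_conj_swap_of_conj_finRotate (h : Perm (Fin 6))
    (ha : h⁻¹ * swap 0 1 * h = swap 0 1) (hc : h⁻¹ * finRotate 6 * h = finRotate 6) : h = 1 := by
  revert h
  decide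

theorem not_isConj_swap_finRotate : ¬ IsConj (swap (0 : Fin 6) 1) (finRotate 6) := by
  rw [isConj_iff_cycleType_eq, isSwap_iff_cycleType.1 ⟨0, 1, by decide, rfl⟩,
    cycleType_finRotate]
  decide

theorem w₀_eq_one_of_conj_of_zero_of_two {g : KleinSumGroup}
    (h₀ : g⁻¹ * PresentedGroup.of 0 * g = PresentedGroup.of 0)
    (h₂ : g⁻¹ * PresentedGroup.of 2 * g = PresentedGroup.of 2) : w₀ g = 1 := by
  have hg : kleinSumToPerm g = 1 := by
    apply eq_one_of_conj_swap_of_conj_finRotate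
    · simpa using congrArg kleinSumToPerm h₀
    · simpa using congrArg kleinSumToPerm h₂
  rw [w₀_eq_sign_kleinSumToPerm]
  simp [hg]

theorem not_isConj_of_zero_of_two :
    ¬ IsConj (PresentedGroup.of 0 : KleinSumGroup) (PresentedGroup.of 2) := fun h =>
  not_isConj_swap_finRotate (by simpa using kleinSumToPerm.map_isConj h)

theorem no_orientation_reversing_conjugator_general
    (α β : KleinSumGroupZ)
    (hα : α = (PresentedGroup.of 0, 1))
    (hβ : β = (PresentedGroup.of 2, 1)) :
    ¬ ∃ lam : KleinSumGroupZ, wChar lam ≠ 1 ∧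
      ((lam⁻¹ * α * lam = α ∧ lam⁻¹ * β * lam = β) ∨
        (lam⁻¹ * α * lam = β ∧ lam⁻¹ * β * lam = α)) := by
  subst hα hβ
  rintro ⟨lam, hw, ⟨h₀, h₂⟩ | ⟨h₀₂, -⟩⟩
  · exact hw (w₀_eq_one_of_conj_of_zero_of_two (congrArg Prod.fst h₀) (congrArg Prod.fst h₂))
  · refine not_isConj_of_zero_of_two (isConj_iff.2 ⟨lam.1⁻¹, ?_⟩)
    simpa using congrArg Prod.fst h₀₂

theorem no_orientation_reversing_conjugator
    (α β : KleinSumGroupZ)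
    (hα : α = (PresentedGroup.of 0, 1))
    (hβ : β = (PresentedGroup.of 2, 1))
    -- `wChar` is indeed determined as in the statement:
    (hw : ∀ i : Fin 4, wChar (PresentedGroup.of i, 1) = ofAdd (1 : ZMod 2))
    (hw' : ∀ n : Multiplicative ℤ, wChar (1, n) = 1) :
    ¬ ∃ lam : KleinSumGroupZ, wChar lam ≠ 1 ∧
      ((lam⁻¹ * α * lam = α ∧ lam⁻¹ * β * lam = β) ∨
        (lam⁻¹ * α * lam = β ∧ lam⁻¹ * β * lam = α)) :=
  no_orientation_reversing_conjugator_general α β hα hβ
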